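/- On the phase space ℝ⁶ with coordinates (x, y, z, p, q, r) and canonical Poisson bracket {F, G} = Σᵢ (∂F/∂xⁱ ∂G/∂pᵢ − ∂F/∂pᵢ ∂G/∂xⁱ), let a = qz − ry, b = rx − pz, c = py − qx, and for constants A, B, C define I₂ = A·a² + B·b² + C·c² − BC·p² − AC·q² − AB·r² and J₂ = (B+C)p² + (A+C)q² + (A+B)r² − a² − b² − c². Then {I₂, J₂} = 0. -/

import Mathlib

private lemma dq (a b : ℝ) (f : ℝ → ℝ) (x : ℝ) (h : ∀ t, f t = a*t^2 + b*t + f 0) :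
    deriv f x = 2*a*x + b := by
  have hc : f = fun t => a*t^2 + b*t + f 0 := funext h
  rw [hc]
  have h2 : HasDerivAt (fun t : ℝ => a*t^2 + b*t + f 0) (2*a*x + b) x := by
    have := (((hasDerivAt_pow 2 x).const_mul a).add ((hasDerivAt_id x).const_mul b)).add_const (f 0)
    refine this.congr_deriv ?_
    push_cast
    ring
  exact h2.deriv

/-- Canonical Poisson bracket on phase space ℝ⁶ with coordinates (x, y, z, p, q, r). -/
noncomputable def poissonBracket (F G : ℝ → ℝ → ℝ → ℝ → ℝ → ℝ → ℝ)
    (x y z p q r : ℝ) : ℝ :=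
    deriv (fun t => F t y z p q r) x * deriv (fun t => G x y z t q r) p
  - deriv (fun t => F x y z t q r) p * deriv (fun t => G t y z p q r) x
  + deriv (fun t => F x t z p q r) y * deriv (fun t => G x y z p t r) q
  - deriv (fun t => F x y z p t r) q * deriv (fun t => G x t z p q r) y
  + deriv (fun t => F x y t p q r) z * deriv (fun t => G x y z p q t) r
  - deriv (fun t => F x y z p q t) r * deriv (fun t => G x y t p q r) z

/-- the quadratic integrals I₂ and J₂ of the flat geodesic flow commute. -/
theorem stmt_8 (A B C : ℝ) :
    ∀ x y z p q r : ℝ,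
      poissonBracket
        (fun x y z p q r =>
          A*(q*z - r*y)^2 + B*(r*x - p*z)^2 + C*(p*y - q*x)^2
            - B*C*p^2 - A*C*q^2 - A*B*r^2)
        (fun x y z p q r =>
          (B+C)*p^2 + (A+C)*q^2 + (A+B)*r^2
            - (q*z - r*y)^2 - (r*x - p*z)^2 - (p*y - q*x)^2)
        x y z p q r = 0 := by
  intro x y z p q r
  simp only [poissonBracket]
  rw [dq (B*r^2 + C*q^2) (-2*B*r*p*z - 2*C*q*p*y)
      (fun t => A*(q*z - r*y)^2 + B*(r*t - p*z)^2 + C*(p*y - q*t)^2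
        - B*C*p^2 - A*C*q^2 - A*B*r^2) x (by intro t; beta_reduce; ring),
    dq (A*r^2 + C*p^2) (-2*A*r*q*z - 2*C*p*q*x)
      (fun t => A*(q*z - r*t)^2 + B*(r*x - p*z)^2 + C*(p*t - q*x)^2
        - B*C*p^2 - A*C*q^2 - A*B*r^2) y (by intro t; beta_reduce; ring),
    dq (A*q^2 + B*p^2) (-2*A*q*r*y - 2*B*p*r*x)
      (fun t => A*(q*t - r*y)^2 + B*(r*x - p*t)^2 + C*(p*y - q*x)^2
        - B*C*p^2 - A*C*q^2 - A*B*r^2) z (by intro t; beta_reduce; ring),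
    dq (B*z^2 + C*y^2 - B*C) (-2*B*r*x*z - 2*C*q*x*y)
      (fun t => A*(q*z - r*y)^2 + B*(r*x - t*z)^2 + C*(t*y - q*x)^2
        - B*C*t^2 - A*C*q^2 - A*B*r^2) p (by intro t; beta_reduce; ring),
    dq (A*z^2 + C*x^2 - A*C) (-2*A*r*y*z - 2*C*p*x*y)
      (fun t => A*(t*z - r*y)^2 + B*(r*x - p*z)^2 + C*(p*y - t*x)^2
        - B*C*p^2 - A*C*t^2 - A*B*r^2) q (by intro t; beta_reduce; ring),
    dq (A*y^2 + B*x^2 - A*B) (-2*A*q*y*z - 2*B*p*x*z)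
      (fun t => A*(q*z - t*y)^2 + B*(t*x - p*z)^2 + C*(p*y - q*x)^2
        - B*C*p^2 - A*C*q^2 - A*B*t^2) r (by intro t; beta_reduce; ring),
    dq (-(r^2) - q^2) (2*r*p*z + 2*q*p*y)
      (fun t => (B+C)*p^2 + (A+C)*q^2 + (A+B)*r^2
        - (q*z - r*y)^2 - (r*t - p*z)^2 - (p*y - q*t)^2) x (by intro t; beta_reduce; ring),
    dq (-(r^2) - p^2) (2*r*q*z + 2*p*q*x)
      (fun t => (B+C)*p^2 + (A+C)*q^2 + (A+B)*r^2
        - (q*z - r*t)^2 - (r*x - p*z)^2 - (p*t - q*x)^2) y (by intro t; beta_reduce; ring),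
    dq (-(q^2) - p^2) (2*q*r*y + 2*p*r*x)
      (fun t => (B+C)*p^2 + (A+C)*q^2 + (A+B)*r^2
        - (q*t - r*y)^2 - (r*x - p*t)^2 - (p*y - q*x)^2) z (by intro t; beta_reduce; ring),
    dq ((B+C) - z^2 - y^2) (2*r*x*z + 2*q*x*y)
      (fun t => (B+C)*t^2 + (A+C)*q^2 + (A+B)*r^2
        - (q*z - r*y)^2 - (r*x - t*z)^2 - (t*y - q*x)^2) p (by intro t; beta_reduce; ring),
    dq ((A+C) - z^2 - x^2) (2*r*y*z + 2*p*x*y)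
      (fun t => (B+C)*p^2 + (A+C)*t^2 + (A+B)*r^2
        - (t*z - r*y)^2 - (r*x - p*z)^2 - (p*y - t*x)^2) q (by intro t; beta_reduce; ring),
    dq ((A+B) - y^2 - x^2) (2*q*y*z + 2*p*x*z)
      (fun t => (B+C)*p^2 + (A+C)*q^2 + (A+B)*t^2
        - (q*z - t*y)^2 - (t*x - p*z)^2 - (p*y - q*x)^2) r (by intro t; beta_reduce; ring)]
  ring
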